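/- Let N be a DAG. Then N is weakly forest-based if and only if the bipartite graph G(N) has a matching of size |V(N)| - |L(N)|. -/

import Mathlib

/-!
Basic notions for finite directed acyclic graphs (DAGs), represented by an
adjacency (arc) relation `A` on a vertex type `V`.
-/

namespace Paper

variable {V : Type*}

/-- A leaf (sink) of the digraph `A`: a vertex of outdegree 0. -/
def IsLeaf (A : V → V → Prop) (v : V) : Prop := ∀ w, ¬ A v w

/-- A root (source) of the digraph `A`: a vertex of indegree 0. -/
def IsRoot (A : V → V → Prop) (v : V) : Prop := ∀ w, ¬ A w v

/-- The arc relation `A` is acyclic (no directed cycles). -/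
def Acyclic (A : V → V → Prop) : Prop := ∀ v, ¬ Relation.TransGen A v v

/-- A directed path in the digraph `A`: a nonempty list of pairwise distinct
vertices, consecutive ones joined by arcs. -/
def IsPath (A : V → V → Prop) (p : List V) : Prop :=
  p ≠ [] ∧ p.Nodup ∧ p.Chain' A

/-- An induced directed path: a directed path such that the only arcs of the
digraph among its vertices are the consecutive arcs of the path. -/
def IsInducedPath (A : V → V → Prop) (p : List V) : Prop :=
  IsPath A p ∧ ∀ i j : Fin p.length, A (p.get i) (p.get j) → (j : ℕ) = (i : ℕ) + 1

/-- A path partition: a collection of vertex-disjoint directed paths whose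
vertex sets partition `V` (every vertex lies in exactly one member). -/
def IsPathPartition (A : V → V → Prop) (P : Set (List V)) : Prop :=
  (∀ p ∈ P, IsPath A p) ∧ ∀ v : V, ∃! p, p ∈ P ∧ v ∈ p

/-- The path `p` ends at a leaf of the digraph `A`. -/
def EndsAtLeaf (A : V → V → Prop) (p : List V) : Prop :=
  ∃ x, p.getLast? = some x ∧ IsLeaf A x

/-- A leaf path partition: a path partition all of whose paths end at a leaf. -/
def IsLeafPP (A : V → V → Prop) (P : Set (List V)) : Prop :=
  IsPathPartition A P ∧ ∀ p ∈ P, EndsAtLeaf A p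

/-- A leaf induced path partition: a leaf path partition all of whose paths are
induced paths. -/
def IsLeafIPP (A : V → V → Prop) (P : Set (List V)) : Prop :=
  IsLeafPP A P ∧ ∀ p ∈ P, IsInducedPath A p

/-- A forest: an acyclic digraph in which every vertex has indegree at most one
(equivalently, every connected component of the underlying undirected graph is
a tree, i.e. is connected, has a single root and no vertex of indegree ≥ 2). -/
def IsForest (F : V → V → Prop) : Prop :=
  Acyclic F ∧ ∀ ⦃u w v⦄, F u v → F w v → u = w

/-- `N = (V, A)` is weakly forest-based: there is a subrelation `F` of `A` that
is a spanning forest whose leaf set equals the leaf set of `N`. -/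
def WeaklyForestBased (A : V → V → Prop) : Prop :=
  ∃ F : V → V → Prop, (∀ ⦃u v⦄, F u v → A u v) ∧ IsForest F ∧
    ∀ v, IsLeaf F v ↔ IsLeaf A v

/-- Reachability in the underlying undirected graph of `F` (i.e. being in the
same connected component of `F`). -/
def UndirReach (F : V → V → Prop) : V → V → Prop :=
  Relation.ReflTransGen fun a b => F a b ∨ F b a

/-- `N = (V, A)` is forest-based: there is a subrelation `F` of `A` that is a
spanning forest whose leaf set equals the leaf set of `N`, such that every arc
of `A` not in `F` has its endpoints in different trees (connected components)
of `F`. -/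
def ForestBased (A : V → V → Prop) : Prop :=
  ∃ F : V → V → Prop, (∀ ⦃u v⦄, F u v → A u v) ∧ IsForest F ∧
    (∀ v, IsLeaf F v ↔ IsLeaf A v) ∧
    ∀ u v, A u v → ¬ F u v → ¬ UndirReach F u v

/-- A matching of the bipartite graph `G(N)` associated to the digraph `A` on
`V`: the vertex classes `V₁, V₂` of `G(N)` are two copies of `V`, and its edges
`{u ∈ V₁, v ∈ V₂}` correspond bijectively to the arcs `(u, v)` of `A`.  A set
of pairwise disjoint edges of `G(N)` is thus the same as a set `M` of arcs of
`A` in which no two arcs share their tail and no two arcs share their head. -/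
def IsBipMatching {V : Type*} (A M : V → V → Prop) : Prop :=
  (∀ ⦃u v⦄, M u v → A u v) ∧ (∀ ⦃u v w⦄, M u v → M u w → v = w) ∧
    ∀ ⦃u v w⦄, M u v → M w v → u = w

/-!
A spanning forest `F ⊆ A` with the leaves of `A` can be thinned to one out-arc per non-leaf; since
indegrees in `F` are at most one, the result is a matching of `G(N)` whose tails are exactly the
non-leaves, so it has `|V| - |L|` edges. Conversely, a matching has at most one out-arc at each
vertex, so its size counts its tails, all of which are non-leaves of `A`; size `|V| - |L|` forces
the tails to be all non-leaves. Such a matching is acyclic as a subgraph of the DAG and has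
indegree at most one, so it is itself a forest with leaf set `L(N)`.
-/

theorem Acyclic.mono {A B : V → V → Prop} (hA : Acyclic A) (hBA : ∀ ⦃u v⦄, B u v → A u v) :
    Acyclic B :=
  fun v hv => hA v (Relation.TransGen.mono (fun _ _ h => hBA h) v v hv)

theorem IsBipMatching.mono {A B M : V → V → Prop} (hM : IsBipMatching B M)
    (hBA : ∀ ⦃u v⦄, B u v → A u v) : IsBipMatching A M :=
  ⟨fun _ _ h => hBA (hM.1 h), hM.2⟩

theorem IsBipMatching.isForest {A M : V → V → Prop} (hacy : Acyclic A) (hM : IsBipMatching A M) :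
    IsForest M :=
  ⟨hacy.mono hM.1, fun _ _ _ huv hwv => hM.2.2 huv hwv⟩

theorem exists_isBipMatching_isLeaf_iff {F : V → V → Prop}
    (hindeg : ∀ ⦃u w v⦄, F u v → F w v → u = w) :
    ∃ M, IsBipMatching F M ∧ ∀ v, IsLeaf M v ↔ IsLeaf F v := by
  refine ⟨fun u v => ∃ h : ∃ w, F u w, h.choose = v, ⟨?_, ?_, ?_⟩, ?_⟩
  · rintro u v ⟨h, rfl⟩
    exact h.choose_spec
  · rintro u v w ⟨h, rfl⟩ ⟨h', rfl⟩
    rfl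
  · rintro u v w ⟨h, rfl⟩ ⟨h', hw⟩
    exact hindeg h.choose_spec (hw ▸ h'.choose_spec)
  · refine fun u => ⟨fun hM w huw => hM _ ⟨⟨w, huw⟩, rfl⟩, ?_⟩
    rintro hF w ⟨h, rfl⟩
    exact hF _ h.choose_spec

theorem weaklyForestBased_iff_exists_isBipMatching {A : V → V → Prop} (hacy : Acyclic A) :
    WeaklyForestBased A ↔ ∃ M, IsBipMatching A M ∧ ∀ v, IsLeaf M v ↔ IsLeaf A v := by
  constructor
  · rintro ⟨F, hFA, ⟨-, hindeg⟩, hleaf⟩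
    obtain ⟨M, hM, hMF⟩ := exists_isBipMatching_isLeaf_iff hindeg
    exact ⟨M, hM.mono hFA, fun v => (hMF v).trans (hleaf v)⟩
  · rintro ⟨M, hM, hleaf⟩
    exact ⟨M, hM.1, hM.isForest hacy, hleaf⟩

theorem ncard_arcs_eq_ncard_not_isLeaf [Finite V] {M : V → V → Prop}
    (htail : ∀ ⦃u v w⦄, M u v → M u w → v = w) :
    {e : V × V | M e.1 e.2}.ncard = {u | ¬ IsLeaf M u}.ncard := by
  have hinj : Set.InjOn Prod.fst {e : V × V | M e.1 e.2} := by
    rintro ⟨u, v⟩ huv ⟨u', w⟩ huw (rfl : u = u')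
    exact congrArg _ (htail huv huw)
  have himage : Prod.fst '' {e : V × V | M e.1 e.2} = {u | ¬ IsLeaf M u} := by
    ext u
    simp [IsLeaf]
  rw [← himage, hinj.ncard_image]

theorem ncard_not_isLeaf [Fintype V] (A : V → V → Prop) :
    {v | ¬ IsLeaf A v}.ncard = Fintype.card V - {v | IsLeaf A v}.ncard := by
  rw [← Nat.card_eq_fintype_card, ← Set.ncard_compl]
  rfl

theorem IsBipMatching.isLeaf_iff_iff_ncard [Fintype V] {A M : V → V → Prop}
    (hM : IsBipMatching A M) :
    (∀ v, IsLeaf M v ↔ IsLeaf A v) ↔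
      {e : V × V | M e.1 e.2}.ncard = Fintype.card V - {v | IsLeaf A v}.ncard := by
  have hsub : {u | ¬ IsLeaf M u} ⊆ {u | ¬ IsLeaf A u} :=
    fun _ hu hA => hu fun w hw => hA w (hM.1 hw)
  rw [ncard_arcs_eq_ncard_not_isLeaf hM.2.1, ← ncard_not_isLeaf]
  constructor
  · intro hleaf
    simp only [hleaf]
  · intro hcard v
    have hset := Set.eq_of_subset_of_ncard_le hsub hcard.ge
    simpa using (Set.ext_iff.mp hset v).not

/-- Let `N` be a (finite) DAG. Then `N` is weakly forest-based
if and only if the bipartite graph `G(N)` has a matching of size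
`|V(N)| - |L(N)|`. -/
theorem weaklyForestBased_iff_matching
    {V : Type*} [Fintype V] (A : V → V → Prop) (hacy : Acyclic A) :
    WeaklyForestBased A ↔
      ∃ M : V → V → Prop, IsBipMatching A M ∧
        {e : V × V | M e.1 e.2}.ncard =
          Fintype.card V - {v : V | IsLeaf A v}.ncard := by
  rw [weaklyForestBased_iff_exists_isBipMatching hacy]
  exact exists_congr fun M => and_congr_right fun hM => hM.isLeaf_iff_iff_ncard

end Paper
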